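/- If a compact connected Riemannian foliated manifold (M,F,g) has all basic harmonic 1-forms of constant length, then b₁(F) ≤ codim F, where b₁(F) = dim H_B^1(M). -/
import Mathlib


/-!
STATEMENT 6: If a compact connected Riemannian foliated manifold `(M, F, g)` has all
basic harmonic 1-forms of constant length, then `b₁(F) ≤ codim F`.

Model: `H` is the space of basic harmonic 1-forms (so `b₁(F) = dim_ℝ H`), and
`s : H → (M → ℝ^q)` records the metric duals: `s α p` is the value at `p ∈ M` of the
metric-dual vector field of `α`, a section of the normal bundle `N = TF^⊥` of rank
`q = codim F`, whose fiber is identified isometrically with `ℝ^q`.  A basic harmonic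
1-form vanishing at every point is zero, and the constant-length hypothesis says
`p ↦ ‖s α p‖` is constant for every `α ∈ H`.  Conclusion: `dim H ≤ q`.
-/
theorem betti_one_le_codim_of_constant_length
    {M H : Type*} [Nonempty M] [AddCommGroup H] [Module ℝ H] [FiniteDimensional ℝ H]
    (q : ℕ)
    (s : H →ₗ[ℝ] M → EuclideanSpace ℝ (Fin q))
    (hinj : ∀ α : H, (∀ p : M, s α p = 0) → α = 0)
    (hconst : ∀ α : H, ∃ c : ℝ, ∀ p : M, ‖s α p‖ = c) :
    Module.finrank ℝ H ≤ q := by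
  obtain ⟨p₀⟩ := ‹Nonempty M›
  have hT : Function.Injective ((LinearMap.proj p₀ : (M → EuclideanSpace ℝ (Fin q)) →ₗ[ℝ] _) ∘ₗ s) := by
    rw [← LinearMap.ker_eq_bot, LinearMap.ker_eq_bot']
    intro α hα
    obtain ⟨c, hc⟩ := hconst α
    have hc0 : c = 0 := by
      have := hc p₀
      simp only [LinearMap.comp_apply, LinearMap.proj_apply] at hα
      rw [hα, norm_zero] at this
      exact this.symm
    exact hinj α fun p => norm_eq_zero.mp (by rw [hc p, hc0])
  calc Module.finrank ℝ H ≤ Module.finrank ℝ (EuclideanSpace ℝ (Fin q)) :=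
        LinearMap.finrank_le_finrank_of_injective hT
    _ = q := finrank_euclideanSpace_fin
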